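/- arXiv:1807.07992 — 5 statements merged into one kernel-verified Lean document; each statement's English description precedes it below -/
import Mathlib

section
/- In the generalized distance matrix of the 7-cycle C_7 (with indeterminates x_0,…,x_6 on the diagonal and cyclic distances off-diagonal), the 3×3 submatrix with rows {0,1,2} and columns {4,5,6} has determinant 2, and the one with rows {1,2,4} and columns {3,5,6} has determinant 5; hence the ideal generated by all 3×3 minors of this matrix is the unit ideal of ℤ[x_0,…,x_6]. -/
/-! Both minors have disjoint row and column sets, so they avoid the diagonal indeterminates and
are integer minors of the cyclic distance matrix; as `gcd(2, 5) = 1`, the minor ideal contains `1`. -/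

open MvPolynomial

def cycleDistMatrix (n : ℕ) : Matrix (Fin n) (Fin n) ℤ :=
  fun i j => min |(i : ℤ) - j| (n - |(i : ℤ) - j|)

theorem Ideal.eq_top_of_intCast_mem {R : Type*} [CommRing R] (I : Ideal R) {a b : ℤ}
    (hab : IsCoprime a b) (ha : (a : R) ∈ I) (hb : (b : R) ∈ I) : I = ⊤ := by
  obtain ⟨u, v, huv⟩ := hab
  rw [Ideal.eq_top_iff_one]
  have h : ((u * a + v * b : ℤ) : R) ∈ I := by
    push_cast
    exact I.add_mem (I.mul_mem_left _ ha) (I.mul_mem_left _ hb)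
  simpa [huv] using h

theorem det_submatrix_eq_C_det_of_ne {ι σ R : Type*} [CommRing R] {m : ℕ}
    {M : Matrix ι ι (MvPolynomial σ R)} {D : Matrix ι ι R}
    (hM : ∀ i j, i ≠ j → M i j = C (D i j)) {r c : Fin m → ι} (hrc : ∀ a b, r a ≠ c b) :
    (M.submatrix r c).det = C (D.submatrix r c).det := by
  rw [RingHom.map_det]
  exact congrArg Matrix.det (Matrix.ext fun a b => hM _ _ (hrc a b))

theorem det_cycleDistMatrix_seven_submatrix_012_456 :
    ((cycleDistMatrix 7).submatrix ![0, 1, 2] ![4, 5, 6]).det = 2 := by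
  rw [Matrix.det_fin_three]; decide

theorem det_cycleDistMatrix_seven_submatrix_124_356 :
    ((cycleDistMatrix 7).submatrix ![1, 2, 4] ![3, 5, 6]).det = 5 := by
  rw [Matrix.det_fin_three]; decide

theorem stmt_2 (M : Matrix (Fin 7) (Fin 7) (MvPolynomial (Fin 7) ℤ))
    (hM : ∀ i j : Fin 7, M i j =
      (if i = j then X i else 0) +
        C (min |(i : ℤ) - (j : ℤ)| (7 - |(i : ℤ) - (j : ℤ)|))) :
    (M.submatrix (![0, 1, 2] : Fin 3 → Fin 7) (![4, 5, 6] : Fin 3 → Fin 7)).det = 2 ∧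
    (M.submatrix (![1, 2, 4] : Fin 3 → Fin 7) (![3, 5, 6] : Fin 3 → Fin 7)).det = 5 ∧
    Ideal.span {p : MvPolynomial (Fin 7) ℤ | ∃ (r c : Fin 3 → Fin 7),
      Function.Injective r ∧ Function.Injective c ∧ p = (M.submatrix r c).det} = ⊤ := by
  have hoff : ∀ i j, i ≠ j → M i j = C (cycleDistMatrix 7 i j) := fun i j hij => by
    simp [hM, hij, cycleDistMatrix]
  have h₁ : (M.submatrix ![0, 1, 2] ![4, 5, 6]).det = 2 := by
    rw [det_submatrix_eq_C_det_of_ne hoff (by decide),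
      det_cycleDistMatrix_seven_submatrix_012_456, map_ofNat]
  have h₂ : (M.submatrix ![1, 2, 4] ![3, 5, 6]).det = 5 := by
    rw [det_submatrix_eq_C_det_of_ne hoff (by decide),
      det_cycleDistMatrix_seven_submatrix_124_356, map_ofNat]
  have hcop : IsCoprime (2 : ℤ) 5 := by norm_num [Int.isCoprime_iff_gcd_eq_one]
  refine ⟨h₁, h₂, Ideal.eq_top_of_intCast_mem _ hcop ?_ ?_⟩
  · exact Ideal.subset_span ⟨![0, 1, 2], ![4, 5, 6], by decide, by decide, by simpa using h₁.symm⟩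
  · exact Ideal.subset_span ⟨![1, 2, 4], ![3, 5, 6], by decide, by decide, by simpa using h₂.symm⟩
end

section
/- Consider the 5×5 matrix M over ℤ[u,v,x_1,x_2,x_3] given by M = [[u,2,2,2,1],[2,v,2,1,2],[2,2,x_1,1,1],[2,1,1,x_2,1],[1,2,1,1,x_3]]. The ideal of ℤ[u,v,x_1,x_2,x_3] generated by all 3×3 minors of M is the unit ideal. -/
open MvPolynomial

theorem stmt_3 :
    letI u : MvPolynomial (Fin 5) ℤ := X 0
    letI v : MvPolynomial (Fin 5) ℤ := X 1
    letI x₁ : MvPolynomial (Fin 5) ℤ := X 2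
    letI x₂ : MvPolynomial (Fin 5) ℤ := X 3
    letI x₃ : MvPolynomial (Fin 5) ℤ := X 4
    letI M : Matrix (Fin 5) (Fin 5) (MvPolynomial (Fin 5) ℤ) :=
      !![u, 2, 2, 2, 1;
         2, v, 2, 1, 2;
         2, 2, x₁, 1, 1;
         2, 1, 1, x₂, 1;
         1, 2, 1, 1, x₃]
    Ideal.span {p : MvPolynomial (Fin 5) ℤ | ∃ (r c : Fin 3 → Fin 5),
      Function.Injective r ∧ Function.Injective c ∧ p = (M.submatrix r c).det} = ⊤ := by
  have minor_eq : ((!![X 0, 2, 2, 2, 1; 2, X 1, 2, 1, 2; 2, 2, X 2, 1, 1; 2, 1, 1, X 3, 1;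
      1, 2, 1, 1, X 4] : Matrix (Fin 5) (Fin 5) (MvPolynomial (Fin 5) ℤ)).submatrix
        ![1, 3, 4] ![0, 2, 3]).det = -1 := by
    rw [Matrix.det_fin_three]
    simp only [Matrix.submatrix_apply, Matrix.of_apply, Matrix.cons_val_zero, Matrix.cons_val_one,
      Matrix.cons_val]
    ring
  refine Ideal.eq_top_of_isUnit_mem _
    (Ideal.subset_span ⟨![1, 3, 4], ![0, 2, 3], by decide, by decide, rfl⟩) ?_
  rw [minor_eq]
  exact isUnit_one.neg
end

section
/- Let M be the 6×6 symmetric matrix from the G_{6,5} configuration: M = [[x_0,y_2,y_1,y_0,2,1],[y_2,x_1,2,2,1,2],[y_1,2,x_2,1,1,2],[y_0,2,1,x_3,1,2],[2,1,1,1,x_4,1],[1,2,2,2,1,x_5]]. If y_2 is specialized to either 2 or 3, then the ideal of the ambient polynomial ring generated by all 3×3 minors of M is the unit ideal. -/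
/-!
Specialising `y₂ = t`, the minor on rows `{0, 2, 4}` and columns `{1, 3, 5}` is the constant
`1 - t`, and the minor on rows `{0, 2, 5}` and columns `{1, 3, 4}` is the constant `4 - t`.
Their difference is `3`, so they are coprime integers, and the ideal of `3 × 3` minors is the unit
ideal, as soon as `t ≢ 1 [ZMOD 3]`; this covers `t = 2` and `t = 3`.
-/

open MvPolynomial

namespace Matrix

variable {m n R : Type*} [CommRing R]

def minorIdeal (k : ℕ) (M : Matrix m n R) : Ideal R :=
  Ideal.span {p | ∃ (r : Fin k → m) (c : Fin k → n),
    Function.Injective r ∧ Function.Injective c ∧ p = (M.submatrix r c).det}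

theorem det_submatrix_mem_minorIdeal {k : ℕ} (M : Matrix m n R) {r : Fin k → m} {c : Fin k → n}
    (hr : Function.Injective r) (hc : Function.Injective c) :
    (M.submatrix r c).det ∈ M.minorIdeal k :=
  Ideal.subset_span ⟨r, c, hr, hc, rfl⟩

end Matrix

noncomputable def g65Matrix (t : ℤ) : Matrix (Fin 6) (Fin 6) (MvPolynomial (Fin 8) ℤ) :=
  letI x : Fin 6 → MvPolynomial (Fin 8) ℤ := fun i => X (Fin.castAdd 2 i)
  letI y : Fin 2 → MvPolynomial (Fin 8) ℤ := fun i => X (Fin.natAdd 6 i)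
  !![x 0, C t, y 1, y 0, 2, 1;
     C t, x 1, 2, 2, 1, 2;
     y 1, 2, x 2, 1, 1, 2;
     y 0, 2, 1, x 3, 1, 2;
     2, 1, 1, 1, x 4, 1;
     1, 2, 2, 2, 1, x 5]

theorem det_g65Matrix_submatrix_024_135 (t : ℤ) :
    ((g65Matrix t).submatrix ![0, 2, 4] ![1, 3, 5]).det = C (1 - t) := by
  rw [Matrix.det_fin_three]
  simp [g65Matrix]
  ring

theorem det_g65Matrix_submatrix_025_134 (t : ℤ) :
    ((g65Matrix t).submatrix ![0, 2, 5] ![1, 3, 4]).det = C (4 - t) := by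
  rw [Matrix.det_fin_three]
  simp [g65Matrix]
  ring

theorem minorIdeal_g65Matrix_eq_top {t : ℤ} (ht : ¬ (3 : ℤ) ∣ t - 1) :
    (g65Matrix t).minorIdeal 3 = ⊤ := by
  have hcop : IsCoprime (1 - t) (4 - t) := by
    have h3 : IsCoprime (3 : ℤ) (1 - t) :=
      Int.prime_three.coprime_iff_not_dvd.mpr fun h => ht (by simpa using h.neg_right)
    simpa [sub_add_eq_add_sub, add_comm] using (h3.symm.add_mul_left_right 1)
  obtain ⟨a, b, hab⟩ := hcop
  rw [Ideal.eq_top_iff_one]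
  have h₁ := (g65Matrix t).det_submatrix_mem_minorIdeal (k := 3)
    (r := ![0, 2, 4]) (c := ![1, 3, 5]) (by decide) (by decide)
  have h₂ := (g65Matrix t).det_submatrix_mem_minorIdeal (k := 3)
    (r := ![0, 2, 5]) (c := ![1, 3, 4]) (by decide) (by decide)
  rw [det_g65Matrix_submatrix_024_135] at h₁
  rw [det_g65Matrix_submatrix_025_134] at h₂
  have h := Ideal.add_mem _ (Ideal.mul_mem_left _ (C a) h₁) (Ideal.mul_mem_left _ (C b) h₂)
  rwa [← map_mul, ← map_mul, ← map_add, hab, map_one] at h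

theorem stmt_5 (t : ℤ) (ht : t = 2 ∨ t = 3) :
    letI x : Fin 6 → MvPolynomial (Fin 8) ℤ := fun i => X ⟨i, by omega⟩
    letI y : Fin 2 → MvPolynomial (Fin 8) ℤ := fun i => X ⟨6 + i, by omega⟩
    letI M : Matrix (Fin 6) (Fin 6) (MvPolynomial (Fin 8) ℤ) :=
      !![x 0, C t, y 1, y 0, 2, 1;
         C t, x 1, 2, 2, 1, 2;
         y 1, 2, x 2, 1, 1, 2;
         y 0, 2, 1, x 3, 1, 2;
         2, 1, 1, 1, x 4, 1;
         1, 2, 2, 2, 1, x 5]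
    Ideal.span {p : MvPolynomial (Fin 8) ℤ | ∃ (r c : Fin 3 → Fin 6),
      Function.Injective r ∧ Function.Injective c ∧ p = (M.submatrix r c).det} = ⊤ :=
  minorIdeal_g65Matrix_eq_top (by rcases ht with rfl | rfl <;> decide)
end

section
/- Let M'' be the 8×8 symmetric matrix [[x_0,2,2,2,3,1,1,a],[2,x_1,2,2,1,3,1,b],[2,2,x_2,1,1,1,2,1],[2,2,1,x_3,1,1,2,d],[3,1,1,1,x_4,2,2,e],[1,3,1,1,2,x_5,2,f],[1,1,2,2,2,2,x_u,1],[a,b,1,d,e,f,1,x_v]] over the polynomial ring ℤ in the variables x_0,…,x_5,x_u,x_v,a,b,d,e,f. Then the ideal generated by all 3×3 minors of M'' is the unit ideal. -/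
open MvPolynomial

theorem Matrix.span_det_submatrix_eq_top_of_isUnit {R m n k : Type*} [CommRing R] [Fintype k]
    [DecidableEq k] (M : Matrix m n R) (r : k → m) (c : k → n) (hr : Function.Injective r)
    (hc : Function.Injective c) (h : IsUnit (M.submatrix r c).det) :
    Ideal.span {p : R | ∃ (r : k → m) (c : k → n),
      Function.Injective r ∧ Function.Injective c ∧ p = (M.submatrix r c).det} = ⊤ :=
  Ideal.eq_top_of_isUnit_mem _ (Ideal.subset_span ⟨r, c, hr, hc, rfl⟩) h

theorem stmt_16 :
    letI x : Fin 6 → MvPolynomial (Fin 13) ℤ := fun i => X ⟨i, by omega⟩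
    letI xu : MvPolynomial (Fin 13) ℤ := X 6
    letI xv : MvPolynomial (Fin 13) ℤ := X 7
    letI a : MvPolynomial (Fin 13) ℤ := X 8
    letI b : MvPolynomial (Fin 13) ℤ := X 9
    letI d : MvPolynomial (Fin 13) ℤ := X 10
    letI e : MvPolynomial (Fin 13) ℤ := X 11
    letI f : MvPolynomial (Fin 13) ℤ := X 12
    letI M : Matrix (Fin 8) (Fin 8) (MvPolynomial (Fin 13) ℤ) :=
      !![x 0, 2, 2, 2, 3, 1, 1, a;
         2, x 1, 2, 2, 1, 3, 1, b;
         2, 2, x 2, 1, 1, 1, 2, 1;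
         2, 2, 1, x 3, 1, 1, 2, d;
         3, 1, 1, 1, x 4, 2, 2, e;
         1, 3, 1, 1, 2, x 5, 2, f;
         1, 1, 2, 2, 2, 2, xu, 1;
         a, b, 1, d, e, f, 1, xv]
    Ideal.span {p : MvPolynomial (Fin 13) ℤ | ∃ (r c : Fin 3 → Fin 8),
      Function.Injective r ∧ Function.Injective c ∧ p = (M.submatrix r c).det} = ⊤ := by
  refine Matrix.span_det_submatrix_eq_top_of_isUnit _ ![0, 2, 6] ![3, 4, 7]
    (by decide) (by decide) ?_
  -- This minor is [[2, 3, a], [1, 1, 1], [2, 2, 1]]; its last two rows are proportional off the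
  -- column of `a`, so the cofactor of `a` vanishes and the minor equals 1.
  convert isUnit_one
  rw [Matrix.det_fin_three]
  simp only [Matrix.submatrix_apply, Matrix.of_apply, Matrix.cons_val', Matrix.cons_val,
    Matrix.cons_val_fin_one, Matrix.cons_val_zero, Matrix.cons_val_one]
  norm_num
end

section
/- Let M be the 7×7 symmetric matrix over ℤ[x_0,…,x_6,y_0,…,y_3]: M = [[x_0,1,y_3,y_2,2,2,1],[1,x_1,y_1,y_0,2,2,1],[y_3,y_1,x_2,2,1,1,2],[y_2,y_0,2,x_3,1,1,2],[2,2,1,1,x_4,2,1],[2,2,1,1,2,x_5,1],[1,1,2,2,1,1,x_6]]. Then 3 is in the ideal of ℤ[x_0,…,x_6,y_0,…,y_3] generated by the 3×3 minors of M, and for each choice of y_0,y_1,y_2,y_3 ∈ {2,3}, the ideal of ℤ[x_0,…,x_6] generated by the 3×3 minors of the specialized matrix is the unit ideal. -/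
/-!
Two fixed $3 \times 3$ minors do all the work. The minor on rows $0, 2, 4$ and columns $1, 5, 6$
is the constant $3$, whatever the entries $x_i, y_j$ are, and the minor on rows $0, 2, 4$ and
columns $1, 3, 5$ is $-5 + 2y_1 + 2y_2 - 2y_1y_2 \equiv y_1y_2 + 2y_1 + 2y_2 + 1 \pmod 3$. For
$y_1, y_2 \in \{2, 3\}$ the latter is an integer prime to $3$, so the ideal of minors contains
two coprime integers and is the unit ideal.
-/

open MvPolynomial

theorem Ideal.eq_top_of_isCoprime_mem {R : Type*} [CommSemiring R] {I : Ideal R} {a b : R}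
    (h : IsCoprime a b) (ha : a ∈ I) (hb : b ∈ I) : I = ⊤ := by
  obtain ⟨u, v, huv⟩ := h
  exact I.eq_top_iff_one.2 (huv ▸ I.add_mem (I.mul_mem_left u ha) (I.mul_mem_left v hb))

section Minors

variable {R m n : Type*} [CommRing R]

def Matrix.minorsIdeal (k : ℕ) (M : Matrix m n R) : Ideal R :=
  Ideal.span {p | ∃ (r : Fin k → m) (c : Fin k → n),
    Function.Injective r ∧ Function.Injective c ∧ p = (M.submatrix r c).det}

theorem Matrix.det_submatrix_mem_minorsIdeal {k : ℕ} (M : Matrix m n R) {r : Fin k → m}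
    {c : Fin k → n} (hr : Function.Injective r) (hc : Function.Injective c) :
    (M.submatrix r c).det ∈ M.minorsIdeal k :=
  Ideal.subset_span ⟨r, c, hr, hc, rfl⟩

end Minors

section G615

variable {R : Type*} [CommRing R]

/-- The generalized distance matrix of the induced `G_{6,15}` subgraph: `x` on the diagonal,
`y` the undetermined distances. -/
def g615Matrix (x : Fin 7 → R) (y : Fin 4 → R) : Matrix (Fin 7) (Fin 7) R :=
  !![x 0, 1, y 3, y 2, 2, 2, 1;
     1, x 1, y 1, y 0, 2, 2, 1;
     y 3, y 1, x 2, 2, 1, 1, 2;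
     y 2, y 0, 2, x 3, 1, 1, 2;
     2, 2, 1, 1, x 4, 2, 1;
     2, 2, 1, 1, 2, x 5, 1;
     1, 1, 2, 2, 1, 1, x 6]

theorem three_mem_minorsIdeal_g615Matrix (x : Fin 7 → R) (y : Fin 4 → R) :
    3 ∈ (g615Matrix x y).minorsIdeal 3 := by
  have hdet : ((g615Matrix x y).submatrix ![0, 2, 4] ![1, 5, 6]).det = 3 := by
    rw [Matrix.det_fin_three]
    simp [g615Matrix]
    ring
  exact hdet ▸ Matrix.det_submatrix_mem_minorsIdeal _ (by decide) (by decide)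

theorem mem_minorsIdeal_g615Matrix (x : Fin 7 → R) (y : Fin 4 → R) :
    -5 + 2 * y 1 + 2 * y 2 - 2 * y 1 * y 2 ∈ (g615Matrix x y).minorsIdeal 3 := by
  have hdet : ((g615Matrix x y).submatrix ![0, 2, 4] ![1, 3, 5]).det =
      -5 + 2 * y 1 + 2 * y 2 - 2 * y 1 * y 2 := by
    rw [Matrix.det_fin_three]
    simp [g615Matrix]
    ring
  exact hdet ▸ Matrix.det_submatrix_mem_minorsIdeal _ (by decide) (by decide)

end G615

theorem isCoprime_three_of_eq_two_or_eq_three {a b : ℤ} (ha : a = 2 ∨ a = 3) (hb : b = 2 ∨ b = 3) :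
    IsCoprime 3 (-5 + 2 * a + 2 * b - 2 * a * b) := by
  rw [Int.isCoprime_iff_gcd_eq_one]
  rcases ha with rfl | rfl <;> rcases hb with rfl | rfl <;> rfl

theorem stmt_17 :
    (letI x : Fin 7 → MvPolynomial (Fin 11) ℤ := fun i => X ⟨i, by omega⟩
     letI y : Fin 4 → MvPolynomial (Fin 11) ℤ := fun i => X ⟨7 + i, by omega⟩
     letI M : Matrix (Fin 7) (Fin 7) (MvPolynomial (Fin 11) ℤ) :=
       !![x 0, 1, y 3, y 2, 2, 2, 1;
          1, x 1, y 1, y 0, 2, 2, 1;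
          y 3, y 1, x 2, 2, 1, 1, 2;
          y 2, y 0, 2, x 3, 1, 1, 2;
          2, 2, 1, 1, x 4, 2, 1;
          2, 2, 1, 1, 2, x 5, 1;
          1, 1, 2, 2, 1, 1, x 6]
     (3 : MvPolynomial (Fin 11) ℤ) ∈
       Ideal.span {p : MvPolynomial (Fin 11) ℤ | ∃ (r c : Fin 3 → Fin 7),
         Function.Injective r ∧ Function.Injective c ∧ p = (M.submatrix r c).det}) ∧
    ∀ t₀ t₁ t₂ t₃ : ℤ, (t₀ = 2 ∨ t₀ = 3) → (t₁ = 2 ∨ t₁ = 3) →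
      (t₂ = 2 ∨ t₂ = 3) → (t₃ = 2 ∨ t₃ = 3) →
      (letI x : Fin 7 → MvPolynomial (Fin 7) ℤ := fun i => X i
       letI M : Matrix (Fin 7) (Fin 7) (MvPolynomial (Fin 7) ℤ) :=
         !![x 0, 1, C t₃, C t₂, 2, 2, 1;
            1, x 1, C t₁, C t₀, 2, 2, 1;
            C t₃, C t₁, x 2, 2, 1, 1, 2;
            C t₂, C t₀, 2, x 3, 1, 1, 2;
            2, 2, 1, 1, x 4, 2, 1;
            2, 2, 1, 1, 2, x 5, 1;
            1, 1, 2, 2, 1, 1, x 6]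
       Ideal.span {p : MvPolynomial (Fin 7) ℤ | ∃ (r c : Fin 3 → Fin 7),
         Function.Injective r ∧ Function.Injective c ∧ p = (M.submatrix r c).det} = ⊤) := by
  refine ⟨three_mem_minorsIdeal_g615Matrix (R := MvPolynomial (Fin 11) ℤ)
    (fun i => X ⟨i, by omega⟩) (fun i => X ⟨7 + i, by omega⟩), fun t₀ t₁ t₂ t₃ _ ht₁ ht₂ _ => ?_⟩
  let y : Fin 4 → MvPolynomial (Fin 7) ℤ := ![C t₀, C t₁, C t₂, C t₃]
  have h3 := three_mem_minorsIdeal_g615Matrix X y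
  have hv := mem_minorsIdeal_g615Matrix X y
  rw [← map_ofNat C 3] at h3
  have hC : -5 + 2 * y 1 + 2 * y 2 - 2 * y 1 * y 2 = C (-5 + 2 * t₁ + 2 * t₂ - 2 * t₁ * t₂) := by
    simp [y]
  rw [hC] at hv
  exact Ideal.eq_top_of_isCoprime_mem ((isCoprime_three_of_eq_two_or_eq_three ht₁ ht₂).map C) h3 hv
end
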